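/- Let n ≥ 1, let f : [0,1) → ℝ be defined by f(0) = 1/2 and f(x) = (1 − √(1 − x²))/x² for 0 < x < 1, and let (p, q) and (p′, q′) be pairs of vectors in ℝ^{n+1} each satisfying ‖q‖ = 1, ⟨p, q⟩ = 0, ‖p‖ < 1 (and similarly for the primed pair). If there exists λ ∈ ℂ with |λ| = 1 such that √(f(‖p‖))·p_j + i·q_j/√(f(‖p‖)) = λ·(√(f(‖p′‖))·p′_j + i·q′_j/√(f(‖p′‖))) for all j, then (p′, q′) = (p, q) or (p′, q′) = (−p, −q). -/

import Mathlib

/-! For `a ≠ 0` the complex vector `z = a p + i q / a` has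
`∑ z_j² = a² ‖p‖² − ‖q‖² / a² + 2 i ⟪p, q⟫`, which for `a = √(f ‖p‖)`, `‖q‖ = 1`, `p ⊥ q` is the
negative real number `−2 √(1 − ‖p‖²)`. If `z = λ z'` with `|λ| = 1`, taking norms of this invariant
gives `‖p‖ = ‖p'‖` and then `λ² = 1`; for `λ = ±1` the real and imaginary parts give
`(p', q') = ±(p, q)`. -/

open scoped RealInnerProductSpace

/-- The auxiliary function `f` of Section 3.1: `f(0) = 1/2` and
`f(x) = (1 − √(1 − x²))/x²` for `x ≠ 0`. -/
noncomputable def auxF (x : ℝ) : ℝ :=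
  if x = 0 then 1 / 2 else (1 - Real.sqrt (1 - x ^ 2)) / x ^ 2

open Complex Finset

lemma auxF_eq_inv_one_add_sqrt {x : ℝ} (hx : x ^ 2 ≤ 1) :
    auxF x = (1 + √(1 - x ^ 2))⁻¹ := by
  unfold auxF
  split_ifs with h0
  · norm_num [h0]
  · have hs : √(1 - x ^ 2) ^ 2 = 1 - x ^ 2 := Real.sq_sqrt (by linarith)
    have : 0 < 1 + √(1 - x ^ 2) := by positivity
    field_simp
    linear_combination -hs

lemma auxF_pos {x : ℝ} (hx : x ^ 2 ≤ 1) : 0 < auxF x := by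
  rw [auxF_eq_inv_one_add_sqrt hx]
  positivity

lemma auxF_mul_sq_sub_inv {x : ℝ} (hx : x ^ 2 ≤ 1) :
    auxF x * x ^ 2 - (auxF x)⁻¹ = -2 * √(1 - x ^ 2) := by
  have hs : √(1 - x ^ 2) ^ 2 = 1 - x ^ 2 := Real.sq_sqrt (by linarith)
  have : 0 < 1 + √(1 - x ^ 2) := by positivity
  rw [auxF_eq_inv_one_add_sqrt hx]
  field_simp
  linear_combination hs

variable {ι : Type*}

/-- With `a = √(f ‖p‖)` this is the representative in `ℂⁿ⁺¹` of `Ψᴾ(p, q)`. -/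
noncomputable def scaledLift (a : ℝ) (p q : EuclideanSpace ℝ ι) (j : ι) : ℂ :=
  ((a * p j : ℝ) : ℂ) + I * ((q j / a : ℝ) : ℂ)

lemma scaledLift_neg (a : ℝ) (p q : EuclideanSpace ℝ ι) :
    scaledLift a (-p) (-q) = -scaledLift a p q := by
  funext j
  simp only [scaledLift, PiLp.neg_apply, Pi.neg_apply]
  push_cast
  ring

lemma scaledLift_injective {a : ℝ} (ha : a ≠ 0) {p q p' q' : EuclideanSpace ℝ ι}
    (h : scaledLift a p q = scaledLift a p' q') : p = p' ∧ q = q' := by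
  have hj (j : ι) : a * p j = a * p' j ∧ q j / a = q' j / a := by
    simpa [scaledLift, Complex.ext_iff] using congrFun h j
  exact ⟨PiLp.ext fun j => mul_left_cancel₀ ha (hj j).1,
    PiLp.ext fun j => (div_left_inj' ha).1 (hj j).2⟩

lemma sum_scaledLift_sq [Fintype ι] {a : ℝ} (ha : a ≠ 0) (p q : EuclideanSpace ℝ ι) :
    ∑ j, scaledLift a p q j ^ 2
      = ((a ^ 2 * ‖p‖ ^ 2 - ‖q‖ ^ 2 / a ^ 2 : ℝ) : ℂ) + 2 * (⟪p, q⟫ : ℂ) * I := by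
  have hterm (j : ι) : scaledLift a p q j ^ 2
      = ((a ^ 2 * p j ^ 2 - q j ^ 2 / a ^ 2 : ℝ) : ℂ) + 2 * ((p j * q j : ℝ) : ℂ) * I := by
    have : (a : ℂ) ≠ 0 := by exact_mod_cast ha
    simp only [scaledLift]
    push_cast
    field_simp
    linear_combination (q j : ℂ) ^ 2 * I_sq
  simp only [hterm, sum_add_distrib, ← sum_mul, ← mul_sum, ← ofReal_sum, sum_sub_distrib,
    ← sum_div, EuclideanSpace.norm_sq_eq, EuclideanSpace.inner_eq_star_dotProduct]
  simp [dotProduct, mul_comm]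

lemma sum_scaledLift_sqrt_auxF_sq [Fintype ι] {p q : EuclideanSpace ℝ ι}
    (hq : ‖q‖ = 1) (hpq : ⟪p, q⟫ = 0) (hp : ‖p‖ ≤ 1) :
    ∑ j, scaledLift √(auxF ‖p‖) p q j ^ 2 = ((-2 * √(1 - ‖p‖ ^ 2) : ℝ) : ℂ) := by
  have hp2 : ‖p‖ ^ 2 ≤ 1 := pow_le_one₀ (norm_nonneg p) hp
  have hF := auxF_pos hp2
  rw [sum_scaledLift_sq (Real.sqrt_pos.2 hF).ne', Real.sq_sqrt hF.le, hq, hpq,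
    ← auxF_mul_sq_sub_inv hp2]
  simp [div_eq_mul_inv]

theorem psiP_injective_general (n : ℕ)
    (p q p' q' : EuclideanSpace ℝ (Fin (n + 1)))
    (hq : ‖q‖ = 1) (hpq : ⟪p, q⟫ = 0) (hp : ‖p‖ < 1)
    (hq' : ‖q'‖ = 1) (hpq' : ⟪p', q'⟫ = 0) (hp' : ‖p'‖ < 1)
    (lam : ℂ) (hlam : ‖lam‖ = 1)
    (h : ∀ j, ((Real.sqrt (auxF ‖p‖) * p j : ℝ) : ℂ) +
        Complex.I * ((q j / Real.sqrt (auxF ‖p‖) : ℝ) : ℂ) =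
      lam * (((Real.sqrt (auxF ‖p'‖) * p' j : ℝ) : ℂ) +
        Complex.I * ((q' j / Real.sqrt (auxF ‖p'‖) : ℝ) : ℂ))) :
    (p' = p ∧ q' = q) ∨ (p' = -p ∧ q' = -q) := by
  change ∀ j, scaledLift _ p q j = lam * scaledLift _ p' q' j at h
  set s := √(1 - ‖p‖ ^ 2)
  set s' := √(1 - ‖p'‖ ^ 2)
  have hs : 0 < s := Real.sqrt_pos.2 (by nlinarith [norm_nonneg p])
  have hsum : ((-2 * s : ℝ) : ℂ) = lam ^ 2 * ((-2 * s' : ℝ) : ℂ) := by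
    rw [← sum_scaledLift_sqrt_auxF_sq hq hpq hp.le, ← sum_scaledLift_sqrt_auxF_sq hq' hpq' hp'.le,
      mul_sum]
    exact sum_congr rfl fun j _ => by rw [h j]; ring
  have hss' : s = s' := by
    simpa [norm_mul, hlam, abs_of_nonneg, s, s'] using congrArg norm hsum
  have hlam2 : lam ^ 2 = 1 := by
    rw [← hss'] at hsum
    have : ((-2 * s : ℝ) : ℂ) ≠ 0 := by exact_mod_cast (by linarith : -2 * s ≠ 0)
    simpa using (mul_eq_right₀ this).1 hsum.symm
  have hpp' : ‖p'‖ = ‖p‖ := by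
    have := (Real.sqrt_inj (by nlinarith [norm_nonneg p]) (by nlinarith [norm_nonneg p'])).1 hss'
    exact (sq_eq_sq₀ (norm_nonneg _) (norm_nonneg _)).1 (by linarith)
  have ha : √(auxF ‖p‖) ≠ 0 := (Real.sqrt_pos.2 (auxF_pos (by nlinarith [norm_nonneg p]))).ne'
  rw [hpp'] at h
  rcases sq_eq_one_iff.1 hlam2 with rfl | rfl
  · obtain ⟨rfl, rfl⟩ := scaledLift_injective ha (funext fun j => by simpa using h j)
    exact Or.inl ⟨rfl, rfl⟩
  · obtain ⟨rfl, rfl⟩ := scaledLift_injective (p' := -p') (q' := -q') ha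
      (funext fun j => by rw [h j, scaledLift_neg]; simp)
    exact Or.inr ⟨(neg_neg _).symm, (neg_neg _).symm⟩

/-- The injectivity argument of Lemma 3.1: if the lifts
`z_j = √(f(‖p‖))·p_j + i·q_j/√(f(‖p‖))` of two points `(p, q)`, `(p′, q′)` of the open
unit disk cotangent bundle of `Sⁿ` agree up to a unit complex scalar `λ`, then
`(p′, q′) = ±(p, q)`. -/
theorem psiP_injective (n : ℕ) (hn : 1 ≤ n)
    (p q p' q' : EuclideanSpace ℝ (Fin (n + 1)))
    (hq : ‖q‖ = 1) (hpq : ⟪p, q⟫ = 0) (hp : ‖p‖ < 1)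
    (hq' : ‖q'‖ = 1) (hpq' : ⟪p', q'⟫ = 0) (hp' : ‖p'‖ < 1)
    (lam : ℂ) (hlam : ‖lam‖ = 1)
    (h : ∀ j, ((Real.sqrt (auxF ‖p‖) * p j : ℝ) : ℂ) +
        Complex.I * ((q j / Real.sqrt (auxF ‖p‖) : ℝ) : ℂ) =
      lam * (((Real.sqrt (auxF ‖p'‖) * p' j : ℝ) : ℂ) +
        Complex.I * ((q' j / Real.sqrt (auxF ‖p'‖) : ℝ) : ℂ))) :
    (p' = p ∧ q' = q) ∨ (p' = -p ∧ q' = -q) :=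
  psiP_injective_general n p q p' q' hq hpq hp hq' hpq' hp' lam hlam h
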